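/- Let (X,d) be a dissimilarity space and p ∈ X. Then the p-copoints of (X,d) are pairwise disjoint, none of them contains p, and together with the singleton {p} they form a partition of X. -/

import Mathlib

structure Dissim (X : Type*) where
  d : X → X → ℝ
  symm : ∀ x y, d x y = d y x
  nonneg : ∀ x y, 0 ≤ d x y
  self : ∀ x, d x x = 0

variable {X : Type*}

def Compatible (D : Dissim X) (lt : X → X → Prop) : Prop :=
  ∀ x y z : X, lt x y → lt y z → D.d x y ≤ D.d x z ∧ D.d y z ≤ D.d x z

def IsCompatOrder (D : Dissim X) (lt : X → X → Prop) : Prop :=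
  IsStrictTotalOrder X lt ∧ Compatible D lt

def Robinson (D : Dissim X) : Prop :=
  ∃ lt : X → X → Prop, IsCompatOrder D lt

def IsMmodule (D : Dissim X) (M : Set X) : Prop :=
  ∀ z ∉ M, ∀ x ∈ M, ∀ y ∈ M, D.d z x = D.d z y

def IsInterval (lt : X → X → Prop) (I : Set X) : Prop :=
  ∀ a b c : X, lt a b → lt b c → a ∈ I → c ∈ I → b ∈ I

def IsBlock (D : Dissim X) (Y : Set X) : Prop :=
  ∀ lt : X → X → Prop, IsCompatOrder D lt → IsInterval lt Y

noncomputable def diam (D : Dissim X) (Y : Set X) : ℝ :=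
  sSup (Set.image2 D.d Y Y)

def Gdelta (D : Dissim X) (δ : ℝ) : SimpleGraph X where
  Adj x y := x ≠ y ∧ D.d x y ≠ δ
  symm := by
    constructor
    rintro x y ⟨hxy, hd⟩
    exact ⟨hxy.symm, by rw [D.symm]; exact hd⟩
  loopless := by constructor; rintro x ⟨h, -⟩; exact h rfl

def Gle (D : Dissim X) (δ : ℝ) : SimpleGraph X where
  Adj x y := x ≠ y ∧ D.d x y ≤ δ
  symm := by
    constructor
    rintro x y ⟨hxy, hd⟩
    exact ⟨hxy.symm, by rw [D.symm]; exact hd⟩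
  loopless := by constructor; rintro x ⟨h, -⟩; exact h rfl

def Glt (D : Dissim X) (δ : ℝ) : SimpleGraph X where
  Adj x y := x ≠ y ∧ D.d x y < δ
  symm := by
    constructor
    rintro x y ⟨hxy, hd⟩
    exact ⟨hxy.symm, by rw [D.symm]; exact hd⟩
  loopless := by constructor; rintro x ⟨h, -⟩; exact h rfl

def IsCompOf {V : Type*} (G : SimpleGraph V) (C : Set V) : Prop :=
  ∃ x : V, C = {y | G.Reachable x y}

def MMax (D : Dissim X) : Set (Set X) :=
  {M | IsMmodule D M ∧ M ≠ Set.univ ∧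
    ∀ M' : Set X, IsMmodule D M' → M' ≠ Set.univ → M ⊆ M' → M = M'}

def IsPartition {α : Type*} (P : Set (Set α)) : Prop :=
  (∀ A ∈ P, A.Nonempty) ∧
  (∀ A ∈ P, ∀ B ∈ P, A ≠ B → Disjoint A B) ∧
  ⋃₀ P = Set.univ

def IsCopartition {α : Type*} (P : Set (Set α)) : Prop :=
  IsPartition ((fun M => Mᶜ) '' P)

def SimpleGraph.restrictTo {V : Type*} (G : SimpleGraph V) (S : Set V) : SimpleGraph V where
  Adj x y := x ∈ S ∧ y ∈ S ∧ G.Adj x y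
  symm := by constructor; rintro x y ⟨hx, hy, h⟩; exact ⟨hy, hx, h.symm⟩
  loopless := by constructor; rintro x ⟨-, -, h⟩; exact G.ne_of_adj h rfl

def ConnectedWithin {V : Type*} (G : SimpleGraph V) (S : Set V) : Prop :=
  S.Nonempty ∧ ∀ x ∈ S, ∀ y ∈ S, (G.restrictTo S).Reachable x y

def IsCompWithin {V : Type*} (G : SimpleGraph V) (S : Set V) (C : Set V) : Prop :=
  ∃ x ∈ S, C = {y | (G.restrictTo S).Reachable x y}

def IsStrictTotalOrderOn {α : Type*} (S : Set α) (lt : α → α → Prop) : Prop :=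
  (∀ x ∈ S, ¬ lt x x) ∧
  (∀ x ∈ S, ∀ y ∈ S, ∀ z ∈ S, lt x y → lt y z → lt x z) ∧
  (∀ x ∈ S, ∀ y ∈ S, x ≠ y → (lt x y ∨ lt y x) ∧ ¬ (lt x y ∧ lt y x))

def CompatibleOn (D : Dissim X) (S : Set X) (lt : X → X → Prop) : Prop :=
  ∀ x ∈ S, ∀ y ∈ S, ∀ z ∈ S, lt x y → lt y z → D.d x y ≤ D.d x z ∧ D.d y z ≤ D.d x z

def IsCompatOrderOn (D : Dissim X) (S : Set X) (lt : X → X → Prop) : Prop :=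
  IsStrictTotalOrderOn S lt ∧ CompatibleOn D S lt

def FlatOn (D : Dissim X) (S : Set X) : Prop :=
  ∃ lt : X → X → Prop, IsCompatOrderOn D S lt ∧ (∃ x ∈ S, ∃ y ∈ S, lt x y) ∧
    ∀ lt' : X → X → Prop, IsCompatOrderOn D S lt' →
      (∀ x ∈ S, ∀ y ∈ S, (lt' x y ↔ lt x y)) ∨ (∀ x ∈ S, ∀ y ∈ S, (lt' x y ↔ lt y x))

def Flat (D : Dissim X) : Prop :=
  ∃ lt : X → X → Prop, IsCompatOrder D lt ∧ (∃ x y : X, lt x y) ∧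
    ∀ lt' : X → X → Prop, IsCompatOrder D lt' →
      (∀ x y : X, lt' x y ↔ lt x y) ∨ (∀ x y : X, lt' x y ↔ lt y x)

def IsCopointAt (D : Dissim X) (p : X) (C : Set X) : Prop :=
  IsMmodule D C ∧ C.Nonempty ∧ p ∉ C ∧
  ∀ C' : Set X, IsMmodule D C' → p ∉ C' → C ⊆ C' → C = C'

def bigGraph (D : Dissim X) (δ : ℝ) (I : Set (Set X)) : SimpleGraph (Set X) where
  Adj C C' := C ∈ I ∧ C' ∈ I ∧ C ≠ C' ∧ ∃ x ∈ C, ∃ y ∈ C', δ < D.d x y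
  symm := by
    constructor
    rintro C C' ⟨hC, hC', hne, x, hx, y, hy, hd⟩
    exact ⟨hC', hC, hne.symm, y, hy, x, hx, by rw [D.symm]; exact hd⟩
  loopless := by constructor; rintro C ⟨-, -, hne, -⟩; exact hne rfl

/- Two overlapping mmodules have an mmodule as union, so two distinct `p`-copoints cannot meet
(each would equal their union); and every `x ≠ p` lies in a copoint, namely a
maximal mmodule avoiding `p` above the mmodule `{x}`, which exists because `X` is finite. -/

theorem IsMmodule.union {D : Dissim X} {M N : Set X} (hM : IsMmodule D M) (hN : IsMmodule D N)
    (hMN : (M ∩ N).Nonempty) : IsMmodule D (M ∪ N) := by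
  obtain ⟨w, hwM, hwN⟩ := hMN
  intro z hz x hx y hy
  rw [Set.mem_union, not_or] at hz
  have to_w : ∀ a ∈ M ∪ N, D.d z a = D.d z w := by
    rintro a (ha | ha)
    · exact hM z hz.1 a ha w hwM
    · exact hN z hz.2 a ha w hwN
  rw [to_w x hx, to_w y hy]

theorem isMmodule_singleton (D : Dissim X) (x : X) : IsMmodule D {x} := by
  rintro z - a rfl b rfl
  rfl

theorem IsCopointAt.disjoint {D : Dissim X} {p : X} {C₁ C₂ : Set X} (h₁ : IsCopointAt D p C₁)
    (h₂ : IsCopointAt D p C₂) (hne : C₁ ≠ C₂) : Disjoint C₁ C₂ := by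
  by_contra hmeet
  have hunion := h₁.1.union h₂.1 (Set.not_disjoint_iff_nonempty_inter.1 hmeet)
  have hp : p ∉ C₁ ∪ C₂ := fun h => h.elim h₁.2.2.1 h₂.2.2.1
  exact hne <| (h₁.2.2.2 _ hunion hp Set.subset_union_left).trans
    (h₂.2.2.2 _ hunion hp Set.subset_union_right).symm

theorem exists_isCopointAt_mem [Finite X] (D : Dissim X) {p x : X} (hx : x ≠ p) :
    ∃ C, IsCopointAt D p C ∧ x ∈ C := by
  obtain ⟨C, hxC, hC⟩ := Finite.exists_le_maximal (p := fun M : Set X => IsMmodule D M ∧ p ∉ M)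
    (a := {x}) ⟨isMmodule_singleton D x, Ne.symm hx⟩
  have hxC : x ∈ C := Set.singleton_subset_iff.1 hxC
  exact ⟨C, ⟨hC.prop.1, ⟨x, hxC⟩, hC.prop.2, fun C' hC' hpC' hle => hC.eq_of_le ⟨hC', hpC'⟩ hle⟩,
    hxC⟩

theorem stmt18_general [Fintype X] (D : Dissim X) (p : X) :
    (∀ C₁ C₂ : Set X, IsCopointAt D p C₁ → IsCopointAt D p C₂ → C₁ ≠ C₂ →
      Disjoint C₁ C₂) ∧
    (∀ C : Set X, IsCopointAt D p C → p ∉ C) ∧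
    IsPartition ({C : Set X | IsCopointAt D p C} ∪ {{p}}) := by
  refine ⟨fun _ _ => IsCopointAt.disjoint, fun C hC => hC.2.2.1, ?_, ?_, ?_⟩
  · rintro A (hA | rfl)
    exacts [hA.2.1, Set.singleton_nonempty p]
  · rintro A (hA | rfl) B (hB | rfl) hne
    · exact hA.disjoint hB hne
    · exact Set.disjoint_singleton_right.2 hA.2.2.1
    · exact Set.disjoint_singleton_left.2 hB.2.2.1
    · exact absurd rfl hne
  · refine Set.eq_univ_of_forall fun x => ?_
    by_cases hx : x = p
    · exact ⟨{p}, Or.inr rfl, hx⟩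
    · obtain ⟨C, hC, hxC⟩ := exists_isCopointAt_mem D hx
      exact ⟨C, Or.inl hC, hxC⟩

/-- the p-copoints are pairwise disjoint, avoid p, and together with
{p} they partition X. -/
theorem stmt18 [Fintype X] [Nonempty X] (D : Dissim X) (p : X) :
    (∀ C₁ C₂ : Set X, IsCopointAt D p C₁ → IsCopointAt D p C₂ → C₁ ≠ C₂ →
      Disjoint C₁ C₂) ∧
    (∀ C : Set X, IsCopointAt D p C → p ∉ C) ∧
    IsPartition ({C : Set X | IsCopointAt D p C} ∪ {{p}}) :=
  stmt18_general D p
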